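/- Let ω be a 2-form with dω = θ∧ω for a closed 1-form θ, and set θ₀ = mθ, θ₁ = (m+1)θ for a real number m. Then the operator d̂ on Ω^k(M) ⊕ Ω^{k-1}(M) defined by d̂(φ,ψ) = (d_{θ₁}φ - ω∧ψ, -d_{θ₀}ψ) satisfies d̂² = 0. -/
import Mathlib


/-!
STATEMENT 17: Let `ω` be a 2-form with `dω = θ∧ω` for a closed 1-form `θ`, and set
`θ₀ = mθ`, `θ₁ = (m+1)θ` for `m ∈ ℝ`.  Then the operator `d̂` on `Ω^k(M) ⊕ Ω^{k-1}(M)`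
defined by `d̂(φ,ψ) = (d_{θ₁}φ - ω∧ψ, -d_{θ₀}ψ)` satisfies `d̂² = 0`.

Abstract model of the de Rham complex of a smooth manifold `M` (Mathlib lacks a de Rham
complex on manifolds): `Ω : ℤ → Type` spaces of forms, `d` exterior derivative, `w1`
wedge with a 1-form, `w2` wedge with a 2-form.
-/

section
variable (Ω : ℤ → Type) [∀ n, AddCommGroup (Ω n)] [∀ n, Module ℝ (Ω n)]

/-- Transport a form along an equality of degrees. -/
def castE {a b : ℤ} (h : a = b) : Ω a ≃ₗ[ℝ] Ω b := by subst h; exact LinearEquiv.refl ℝ (Ω a)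

variable (d : ∀ n : ℤ, Ω n →ₗ[ℝ] Ω (n+1)) (w1 : ∀ n : ℤ, Ω 1 →ₗ[ℝ] Ω n →ₗ[ℝ] Ω (n+1))
variable (w2 : ∀ n : ℤ, Ω 2 →ₗ[ℝ] Ω n →ₗ[ℝ] Ω (n+1+1))

/-- The Lichnerowicz differential `d_η φ = dφ - η ∧ φ`. -/
def lich (η : Ω 1) (n : ℤ) : Ω n →ₗ[ℝ] Ω (n+1) := d n - w1 n η

/-- The operator `d̂(φ,ψ) = (d_{θ₁}φ - ω∧ψ, -d_{θ₀}ψ)` on `Ω^k ⊕ Ω^{k-1}`. -/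
def dhat (θ : Ω 1) (ω : Ω 2) (m : ℝ) (k : ℤ) (p : Ω k × Ω (k-1)) :
    Ω (k+1) × Ω (k+1-1) :=
  (lich Ω d w1 ((m+1) • θ) k p.1
      - castE Ω (show k-1+1+1 = k+1 by omega) (w2 (k-1) ω p.2),
    castE Ω (show k-1+1 = k+1-1 by omega) (-(lich Ω d w1 (m • θ) (k-1) p.2)))

lemma castE_rfl {a : ℤ} (x : Ω a) : castE Ω rfl x = x := rfl

lemma castE_castE {a b c : ℤ} (h : a = b) (h' : b = c) (x : Ω a) :
    castE Ω h' (castE Ω h x) = castE Ω (h.trans h') x := by subst h h'; rfl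

lemma castE_lich (η : Ω 1) {a b : ℤ} (h : a = b) (x : Ω a) :
    lich Ω d w1 η b (castE Ω h x)
      = castE Ω (by rw [h]) (lich Ω d w1 η a x) := by subst h; rfl

lemma castE_w2 (ω : Ω 2) {a b : ℤ} (h : a = b) (x : Ω a) :
    w2 b ω (castE Ω h x) = castE Ω (by rw [h]) (w2 a ω x) := by subst h; rfl

lemma lich_lich
    (hd2 : ∀ (n : ℤ) (φ : Ω n), d (n+1) (d n φ) = 0)
    (hleib : ∀ (η : Ω 1), d 1 η = 0 →
      ∀ (n : ℤ) (φ : Ω n), d (n+1) (w1 n η φ) = - w1 (n+1) η (d n φ))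
    (hww : ∀ (η : Ω 1) (n : ℤ) (φ : Ω n), w1 (n+1) η (w1 n η φ) = 0)
    (η : Ω 1) (hη : d 1 η = 0) (n : ℤ) (φ : Ω n) :
    lich Ω d w1 η (n+1) (lich Ω d w1 η n φ) = 0 := by
  simp [lich, map_sub, hd2, hleib η hη, hww]

theorem dhat_squares_to_zero
    (θ : Ω 1) (hθ : d 1 θ = 0) (ω : Ω 2) (hω : d 2 ω = w1 2 θ ω) (m : ℝ)
    (hd2 : ∀ (n : ℤ) (φ : Ω n), d (n+1) (d n φ) = 0)
    -- Leibniz rule for closed 1-forms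
    (hleib : ∀ (η : Ω 1), d 1 η = 0 →
      ∀ (n : ℤ) (φ : Ω n), d (n+1) (w1 n η φ) = - w1 (n+1) η (d n φ))
    (hww : ∀ (η : Ω 1) (n : ℤ) (φ : Ω n), w1 (n+1) η (w1 n η φ) = 0)
    -- Leibniz rule for wedging with `ω`: `d(ω∧ψ) = dω∧ψ + ω∧dψ = θ∧ω∧ψ + ω∧dψ`
    (hdw2 : ∀ (n : ℤ) (ψ : Ω n),
      d (n+1+1) (w2 n ω ψ) = w1 (n+1+1) θ (w2 n ω ψ) + w2 (n+1) ω (d n ψ))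
    -- the even-degree form `ω` commutes with `θ`: `ω∧(θ∧ψ) = θ∧(ω∧ψ)`
    (hcommθω : ∀ (n : ℤ) (ψ : Ω n),
      w2 (n+1) ω (w1 n θ ψ) = w1 (n+1+1) θ (w2 n ω ψ)) :
    ∀ (k : ℤ) (p : Ω k × Ω (k-1)),
      dhat Ω d w1 w2 θ ω m (k+1) (dhat Ω d w1 w2 θ ω m k p) = 0 := by
  have hθ0 : d 1 (m • θ) = 0 := by rw [map_smul, hθ, smul_zero]
  have hθ1 : d 1 ((m+1) • θ) = 0 := by rw [map_smul, hθ, smul_zero]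
  have key : ∀ (n : ℤ) (ψ : Ω n),
      lich Ω d w1 ((m+1) • θ) (n+1+1) (w2 n ω ψ)
        = w2 (n+1) ω (lich Ω d w1 (m • θ) n ψ) := by
    intro n ψ
    simp only [lich, LinearMap.sub_apply, map_smul, LinearMap.smul_apply,
      hdw2, map_sub, hcommθω]
    module
  intro k p
  obtain ⟨φ, ψ⟩ := p
  simp only [dhat, Prod.ext_iff]
  refine ⟨?_, ?_⟩ <;> simp only [Prod.fst_zero, Prod.snd_zero]
  · rw [map_sub, lich_lich Ω d w1 hd2 hleib hww _ hθ1, castE_lich, map_neg, map_neg,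
      castE_w2, key, map_neg, castE_castE]
    abel
  · rw [castE_lich, map_neg, map_neg, lich_lich Ω d w1 hd2 hleib hww _ hθ0]
    simp

end
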